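/- arXiv:2311.03706 — 3 statements merged into one kernel-verified Lean document; each statement's English description precedes it below -/
import Mathlib

section
/- Let a_1 ≤ a_2 ≤ ... ≤ a_n be nonnegative reals sorted in non-decreasing order, let b ∈ ℝ with a_{n-1} + a_n > b, and let φ be the smallest index such that a_φ + a_{φ+1} > b. Then every binary vector x ∈ {0,1}^n satisfying ∑_{j=1}^n a_j x_j ≤ b satisfies the set packing inequality ∑_{j=φ}^n x_j ≤ 1; that is, the index set {φ, φ+1, ..., n} detected by the Clique Detection algorithm forms a clique in the conflict graph of the knapsack constraint. -/
/-- Clique Detection, original clique validity.  Let `a` be nonnegative coefficients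
sorted in non-decreasing order (indexed by `Fin n`, so `a ⟨n-2,_⟩ + a ⟨n-1,_⟩` is the
sum of the two largest), with the two largest exceeding `b`, and let `φ` be the
smallest index with `a φ + a (φ+1) > b`.  Then every binary vector satisfying the
knapsack constraint `∑ t, a t * x t ≤ b` satisfies the set packing inequality
`∑_{j ≥ φ} x j ≤ 1`; i.e. `{φ, ..., n-1}` is a clique of the conflict graph. -/
theorem cliqueDetection_original_clique (n : ℕ) (hn : 2 ≤ n)
    (a : Fin n → ℝ) (b : ℝ)
    (ha0 : ∀ j, 0 ≤ a j) (hmono : Monotone a)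
    (hlast : b < a ⟨n - 2, by omega⟩ + a ⟨n - 1, by omega⟩)
    (φ : Fin n) (hφ1 : φ.val + 1 < n)
    (hφ : b < a φ + a ⟨φ.val + 1, hφ1⟩)
    (hφmin : ∀ ψ : Fin n, ∀ hψ : ψ.val + 1 < n,
      b < a ψ + a ⟨ψ.val + 1, hψ⟩ → φ ≤ ψ)
    (x : Fin n → ℝ) (hbin : ∀ t, x t = 0 ∨ x t = 1)
    (hknap : ∑ t, a t * x t ≤ b) :
    ∑ j ∈ Finset.univ.filter (fun j => φ ≤ j), x j ≤ 1 := by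
  classical
  set S := Finset.univ.filter (fun j : Fin n => φ ≤ j ∧ x j = 1) with hS
  have hxnn : ∀ t, 0 ≤ x t := by
    intro t; rcases hbin t with h | h <;> simp [h]
  -- key: at most one index in S
  have hcard : S.card ≤ 1 := by
    by_contra hgt
    push_neg at hgt
    obtain ⟨i, hi, j, hj, hij⟩ := Finset.one_lt_card.mp hgt
    simp only [hS, Finset.mem_filter] at hi hj
    -- wlog i < j
    wlog hlt : i < j generalizing i j
    · exact this j i (Ne.symm hij) hj hi (lt_of_le_of_ne (not_lt.mp hlt) (Ne.symm hij))
    have hjv : φ.val + 1 ≤ j.val := by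
      have : φ ≤ i := hi.2.1
      have : φ.val ≤ i.val := this
      have : i.val < j.val := hlt
      omega
    have hai : a φ ≤ a i := hmono hi.2.1
    have haj : a ⟨φ.val + 1, hφ1⟩ ≤ a j := hmono (by exact hjv)
    -- lower bound the knapsack sum by a i + a j
    have hsub : ({i, j} : Finset (Fin n)) ⊆ Finset.univ := Finset.subset_univ _
    have hsum : ∑ t ∈ ({i, j} : Finset (Fin n)), a t * x t ≤ ∑ t, a t * x t := by
      refine Finset.sum_le_sum_of_subset_of_nonneg hsub ?_
      intro t _ _; exact mul_nonneg (ha0 t) (hxnn t)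
    have hpair : ∑ t ∈ ({i, j} : Finset (Fin n)), a t * x t = a i + a j := by
      have hne : i ≠ j := ne_of_lt hlt
      rw [Finset.sum_pair hne, hi.2.2, hj.2.2]; ring
    have : a φ + a ⟨φ.val + 1, hφ1⟩ ≤ b := by
      calc a φ + a ⟨φ.val + 1, hφ1⟩ ≤ a i + a j := add_le_add hai haj
        _ = ∑ t ∈ ({i, j} : Finset (Fin n)), a t * x t := hpair.symm
        _ ≤ ∑ t, a t * x t := hsum
        _ ≤ b := hknap
    linarith
  have hsub2 : S ⊆ Finset.univ.filter (fun j => φ ≤ j) := by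
    intro t ht
    simp only [hS, Finset.mem_filter] at ht ⊢
    exact ⟨ht.1, ht.2.1⟩
  have hsum_eq : ∑ j ∈ Finset.univ.filter (fun j => φ ≤ j), x j = ∑ j ∈ S, x j := by
    refine (Finset.sum_subset hsub2 ?_).symm
    intro t ht hns
    simp only [hS, Finset.mem_filter, Finset.mem_univ, true_and] at ht hns
    rcases hbin t with hx | hx
    · exact hx
    · exact absurd ⟨ht, hx⟩ hns
  have hSone : ∑ j ∈ S, x j = S.card := by
    rw [Finset.card_eq_sum_ones, Nat.cast_sum]
    refine Finset.sum_congr rfl fun t ht => ?_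
    simp only [hS, Finset.mem_filter] at ht
    simp [ht.2.2]
  rw [hsum_eq, hSone]
  exact_mod_cast hcard
end

section
/- Let a_1 ≤ a_2 ≤ ... ≤ a_n be nonnegative reals sorted in non-decreasing order and b ∈ ℝ. Fix an index i, and let σ be the smallest index such that a_i + a_σ > b (assuming such σ exists and i < σ). Then every binary vector x ∈ {0,1}^n satisfying ∑_{j=1}^n a_j x_j ≤ b satisfies the set packing inequality x_i + ∑_{j=σ}^n x_j ≤ 1; that is, the index set {i} ∪ {σ, σ+1, ..., n} detected by the Clique Detection algorithm forms a clique in the conflict graph of the knapsack constraint. -/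
/-- Clique Detection, validity of the other cliques.  Let `a` be nonnegative sorted
non-decreasing, fix an index `i`, and let `σ` be the smallest index with
`a i + a σ > b`, assuming `i < σ`.  Then every binary vector satisfying the knapsack
constraint `∑ t, a t * x t ≤ b` satisfies `x i + ∑_{j ≥ σ} x j ≤ 1`;
i.e. `{i} ∪ {σ, ..., n-1}` is a clique of the conflict graph. -/
theorem cliqueDetection_other_clique (n : ℕ)
    (a : Fin n → ℝ) (b : ℝ)
    (ha0 : ∀ j, 0 ≤ a j) (hmono : Monotone a)
    (i σ : Fin n) (hiσ : i < σ)
    (hσ : b < a i + a σ)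
    (hσmin : ∀ τ : Fin n, b < a i + a τ → σ ≤ τ)
    (x : Fin n → ℝ) (hbin : ∀ t, x t = 0 ∨ x t = 1)
    (hknap : ∑ t, a t * x t ≤ b) :
    x i + ∑ j ∈ Finset.univ.filter (fun j => σ ≤ j), x j ≤ 1 := by
  have pair : ∀ p q : Fin n, p ≠ q → x p = 1 → x q = 1 → a p + a q ≤ b := by
    intro p q hpq hp hq
    have hnn : ∀ t ∈ Finset.univ, 0 ≤ a t * x t := by
      intro t _; rcases hbin t with h | h <;> simp [h, ha0 t]
    calc a p + a q = ∑ t ∈ ({p, q} : Finset (Fin n)), a t * x t := by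
          rw [Finset.sum_pair hpq, hp, hq]; ring
      _ ≤ ∑ t, a t * x t :=
          Finset.sum_le_sum_of_subset_of_nonneg (Finset.subset_univ _)
            (fun t ht _ => hnn t ht)
      _ ≤ b := hknap
  set F := Finset.univ.filter (fun j : Fin n => σ ≤ j) with hF
  set F1 := F.filter (fun j => x j = 1) with hF1
  have hmemF1 : ∀ j ∈ F1, σ ≤ j ∧ x j = 1 := by
    intro j hj
    have := Finset.mem_filter.mp hj
    exact ⟨(Finset.mem_filter.mp this.1).2, this.2⟩
  have hSum : ∑ j ∈ F, x j = (F1.card : ℝ) := by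
    rw [← Finset.sum_filter_add_sum_filter_not F (fun j => x j = 1) x]
    have h1 : ∑ j ∈ F.filter (fun j => x j = 1), x j = (F1.card : ℝ) := by
      rw [Finset.card_eq_sum_ones]; push_cast
      exact Finset.sum_congr rfl (fun j hj => (Finset.mem_filter.mp hj).2)
    have h2 : ∑ j ∈ F.filter (fun j => ¬ x j = 1), x j = 0 := by
      apply Finset.sum_eq_zero; intro j hj
      rcases hbin j with h | h
      · exact h
      · exact absurd h (Finset.mem_filter.mp hj).2
    rw [h1, h2, add_zero]
  rw [hSum]
  rcases hbin i with hi | hi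
  · -- x i = 0 : need card F1 ≤ 1
    rw [hi, zero_add]
    have hcard : F1.card ≤ 1 := by
      by_contra h
      push_neg at h
      obtain ⟨p, hp, q, hq, hpq⟩ := Finset.one_lt_card.mp h
      obtain ⟨hpσ, hpx⟩ := hmemF1 p hp
      obtain ⟨hqσ, hqx⟩ := hmemF1 q hq
      have hle : a p + a q ≤ b := pair p q hpq hpx hqx
      have : a i + a σ ≤ a p + a q :=
        add_le_add (hmono (le_of_lt (lt_of_lt_of_le hiσ hpσ))) (hmono hqσ)
      linarith
    exact_mod_cast hcard
  · -- x i = 1 : need card F1 = 0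
    rw [hi]
    have hcard : F1 = ∅ := by
      by_contra h
      obtain ⟨j, hj⟩ := Finset.nonempty_iff_ne_empty.mpr h
      obtain ⟨hjσ, hjx⟩ := hmemF1 j hj
      have hij : i ≠ j := Fin.ne_of_lt (lt_of_lt_of_le hiσ hjσ)
      have hle : a i + a j ≤ b := pair i j hij hi hjx
      have : a σ ≤ a j := hmono hjσ
      linarith
    simp [hcard]
end

section
/- Let a_1 ≤ a_2 ≤ ... ≤ a_n be nonnegative reals sorted in non-decreasing order, b ∈ ℝ, and let φ be the smallest index with a_φ + a_{φ+1} > b. Fix i < φ and let σ be the smallest index with a_i + a_σ > b (assuming it exists, so i < σ). Then the clique {i} ∪ {σ, ..., n} is maximal in the conflict graph of the knapsack constraint ∑_{j=1}^n a_j x_j ≤ b: for every index t ∉ {i} ∪ {σ, ..., n}, the binary vector with x_t = x_i = 1 and all other entries 0 satisfies the constraint, so t is not in conflict with i. -/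
/-- Clique Detection, maximality of the other cliques.  With `a` nonnegative sorted
non-decreasing, `φ` the smallest index with `a φ + a (φ+1) > b`, `i < φ`, and
`σ` the smallest index with `a i + a σ > b` (with `i < σ`), the clique
`{i} ∪ {σ, ..., n-1}` is maximal: for every index `t` outside this set
(`t ≠ i` and `t < σ`), the binary vector with `x t = x i = 1` and all other
entries `0` satisfies the knapsack constraint, so `t` is not in conflict with `i`. -/
theorem cliqueDetection_other_clique_maximal (n : ℕ) (hn : 2 ≤ n)
    (a : Fin n → ℝ) (b : ℝ)
    (ha0 : ∀ j, 0 ≤ a j) (hmono : Monotone a)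
    (φ : Fin n) (hφ1 : φ.val + 1 < n)
    (hφ : b < a φ + a ⟨φ.val + 1, hφ1⟩)
    (hφmin : ∀ ψ : Fin n, ∀ hψ : ψ.val + 1 < n,
      b < a ψ + a ⟨ψ.val + 1, hψ⟩ → φ ≤ ψ)
    (i σ : Fin n) (hiφ : i < φ) (hiσ : i < σ)
    (hσ : b < a i + a σ)
    (hσmin : ∀ τ : Fin n, b < a i + a τ → σ ≤ τ) :
    ∀ t : Fin n, t ≠ i → t < σ →
      (∑ t' , a t' * (if t' = t ∨ t' = i then (1 : ℝ) else 0)) ≤ b ∧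
      ¬ (∀ x : Fin n → ℝ, (∀ s, x s = 0 ∨ x s = 1) → ∑ s, a s * x s ≤ b →
          ¬ (x t = 1 ∧ x i = 1)) := by
  intro t hti htσ
  have hle : a i + a t ≤ b := by
    by_contra h
    push_neg at h
    exact absurd (hσmin t h) (not_le.mpr htσ)
  have key : (∑ t', a t' * (if t' = t ∨ t' = i then (1 : ℝ) else 0)) = a t + a i := by
    have h1 : ∀ t' : Fin n,
        a t' * (if t' = t ∨ t' = i then (1 : ℝ) else 0)
          = if t' ∈ ({t, i} : Finset (Fin n)) then a t' else 0 := by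
      intro t'
      by_cases h : t' = t ∨ t' = i
      · simp [h, Finset.mem_insert, Finset.mem_singleton]
      · simp [h, Finset.mem_insert, Finset.mem_singleton]
    rw [Finset.sum_congr rfl fun t' _ => h1 t']
    rw [Finset.sum_ite_mem, Finset.univ_inter, Finset.sum_pair hti]
  have hsum : (∑ t', a t' * (if t' = t ∨ t' = i then (1 : ℝ) else 0)) ≤ b := by
    rw [key]; linarith
  refine ⟨hsum, ?_⟩
  intro hall
  refine hall (fun s => if s = t ∨ s = i then (1 : ℝ) else 0)
    (fun s => by by_cases h : s = t ∨ s = i <;> simp [h]) hsum ⟨?_, ?_⟩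
  · simp
  · simp
end
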